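/- (Modified Jarzynski equality for different initial temperatures, Theorem 2.) With Δβ = β_B − β_S, one has Σ_i (exp(−β_S ε_i)/Z_S0)·exp(−β_S W̃(i)) = exp(−β_S ΔF_S)·exp(−D)·exp(−Δβ·Q̃); moreover, by Jensen's inequality, Σ_i (exp(−β_S ε_i)/Z_S0)·W̃(i) ≥ ΔF_S + β_S⁻¹·D + (Δβ/β_S)·Q̃. -/

import Mathlib

open Matrix Kronecker BigOperators Finset

noncomputable section

/-- Partial trace over the bath (second tensor factor). -/
def ptraceB {n m : ℕ} (X : Matrix (Fin n × Fin m) (Fin n × Fin m) ℂ) :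
    Matrix (Fin n) (Fin n) ℂ :=
  Matrix.of fun i i' => ∑ j, X (i, j) (i', j)

/-- Outer product `|v⟩⟨v|`. -/
def outer {k : ℕ} (v : Fin k → ℂ) : Matrix (Fin k) (Fin k) ℂ :=
  Matrix.vecMulVec v (star v)

/-- Partition function `Z = Tr exp (−β H)` (real part of the trace). -/
def Zpart (β : ℝ) {k : ℕ} (H : Matrix (Fin k) (Fin k) ℂ) : ℝ :=
  (NormedSpace.exp ((-β) • H)).trace.re

/-- Gibbs state `exp (−β H) / Z`. -/
def gibbs (β : ℝ) {k : ℕ} (H : Matrix (Fin k) (Fin k) ℂ) : Matrix (Fin k) (Fin k) ℂ :=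
  ((Zpart β H : ℂ)⁻¹) • NormedSpace.exp ((-β) • H)

/-- The channel `Φ(ρ) = Tr_B [U (ρ ⊗ τB) U†]`. -/
def channel {n m : ℕ} (U : Matrix (Fin n × Fin m) (Fin n × Fin m) ℂ)
    (τB : Matrix (Fin m) (Fin m) ℂ) (ρ : Matrix (Fin n) (Fin n) ℂ) :
    Matrix (Fin n) (Fin n) ℂ :=
  ptraceB (U * (ρ ⊗ₖ τB) * Uᴴ)

/-!
The guessed state `Θ` has product spectrum `p ⊗ w`, with `p ∝ exp (-β_S E)` and `w` the Gibbs
weights of the bath, so its entropy splits and the relative entropy collapses to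
`D = ln Z_St - ln Z̃ - β_B Q̃`: the bath-energy term of `Θ` in `D` cancels against the one in `Q̃`.
With this value of `D` the exponential average of the guessed work is a direct computation, and
Jensen's inequality for `exp` turns the equality into the bound on the average work.
-/

section Boltzmann

variable {ι : Type*} [Fintype ι]

def boltzmann (β : ℝ) (x : ι → ℝ) (i : ι) : ℝ :=
  Real.exp (-(β * x i)) / ∑ j, Real.exp (-(β * x j))

lemma sum_boltzmann_mul_exp_neg_mul_sub_sub (β : ℝ) (x E : ι → ℝ) (Q : ℝ) :
    ∑ i, boltzmann β x i * Real.exp (-(β * (E i - x i - Q)))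
      = (∑ i, Real.exp (-(β * E i))) / (∑ i, Real.exp (-(β * x i))) * Real.exp (β * Q) := by
  have hterm : ∀ i, boltzmann β x i * Real.exp (-(β * (E i - x i - Q)))
      = Real.exp (-(β * E i)) / (∑ j, Real.exp (-(β * x j))) * Real.exp (β * Q) := fun i => by
    rw [boltzmann, div_mul_eq_mul_div, div_mul_eq_mul_div, ← Real.exp_add, ← Real.exp_add]
    ring_nf
  simp only [hterm, ← sum_mul, ← sum_div]

variable [Nonempty ι] (β : ℝ) (x : ι → ℝ)

lemma sum_exp_neg_mul_pos : 0 < ∑ j, Real.exp (-(β * x j)) :=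
  sum_pos (fun _ _ => Real.exp_pos _) univ_nonempty

lemma sum_boltzmann : ∑ i, boltzmann β x i = 1 := by
  simp only [boltzmann, ← sum_div, div_self (sum_exp_neg_mul_pos β x).ne']

lemma sum_boltzmann_mul_log :
    ∑ i, boltzmann β x i * Real.log (boltzmann β x i)
      = -(β * ∑ i, boltzmann β x i * x i) - Real.log (∑ j, Real.exp (-(β * x j))) := by
  have hlog : ∀ i, Real.log (boltzmann β x i)
      = -(β * x i) - Real.log (∑ j, Real.exp (-(β * x j))) := fun i => by
    rw [boltzmann, Real.log_div (Real.exp_pos _).ne' (sum_exp_neg_mul_pos β x).ne', Real.log_exp]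
  simp only [hlog, mul_sub, sum_sub_distrib, ← sum_mul, sum_boltzmann, one_mul]
  rw [mul_sum, ← sum_neg_distrib]
  exact congrArg (· - _) (sum_congr rfl fun i _ => by ring)

lemma sum_boltzmann_mul_exp_neg_mul_work_eq {β βB Δβ Q D ΔF ZSt : ℝ} {ε E : ι → ℝ}
    (hβ : β ≠ 0) (hZSt : 0 < ZSt) (hΔβ : Δβ = βB - β)
    (hΔF : ΔF = -(β⁻¹ * Real.log (ZSt / ∑ i, Real.exp (-(β * ε i)))))
    (hD : D = Real.log ZSt - Real.log (∑ i, Real.exp (-(β * E i))) - βB * Q) :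
    ∑ i, boltzmann β ε i * Real.exp (-(β * (E i - ε i - Q)))
      = Real.exp (-(β * ΔF)) * Real.exp (-D) * Real.exp (-(Δβ * Q)) := by
  have hexponent : -(β * ΔF) + -D + -(Δβ * Q)
      = Real.log (∑ i, Real.exp (-(β * E i))) - Real.log (∑ i, Real.exp (-(β * ε i))) + β * Q := by
    rw [hΔF, hD, hΔβ, Real.log_div hZSt.ne' (sum_exp_neg_mul_pos β ε).ne']
    field_simp
    ring
  rw [sum_boltzmann_mul_exp_neg_mul_sub_sub, ← Real.exp_add, ← Real.exp_add, hexponent,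
    Real.exp_add, Real.exp_sub, Real.exp_log (sum_exp_neg_mul_pos β E),
    Real.exp_log (sum_exp_neg_mul_pos β ε)]

end Boltzmann

lemma sum_sum_mul_mul_log_mul {ι κ : Type*} [Fintype ι] [Fintype κ] (p : ι → ℝ) (w : κ → ℝ)
    (hp : ∑ i, p i = 1) (hw : ∑ j, w j = 1) :
    ∑ i, ∑ j, p i * w j * Real.log (p i * w j)
      = ∑ i, p i * Real.log (p i) + ∑ j, w j * Real.log (w j) := by
  have hterm : ∀ i j, p i * w j * Real.log (p i * w j)
      = w j * (p i * Real.log (p i)) + p i * (w j * Real.log (w j)) := fun i j => by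
    have h := Real.negMulLog_mul (p i) (w j)
    simp only [Real.negMulLog] at h
    linarith
  simp only [hterm, sum_add_distrib, ← mul_sum]
  simp only [← sum_mul, hp, hw, one_mul]

lemma le_sum_mul_of_sum_mul_exp_neg_mul_le {ι : Type*} [Fintype ι] {w W : ι → ℝ}
    (hw0 : ∀ i, 0 ≤ w i) (hw1 : ∑ i, w i = 1) {β X : ℝ} (hβ : 0 < β)
    (h : ∑ i, w i * Real.exp (-(β * W i)) ≤ Real.exp (-(β * X))) :
    X ≤ ∑ i, w i * W i := by
  have hjensen : Real.exp (∑ i, w i * -(β * W i)) ≤ ∑ i, w i * Real.exp (-(β * W i)) := by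
    simpa only [smul_eq_mul] using convexOn_exp.map_sum_le (t := univ) (p := fun i => -(β * W i))
      (fun i _ => hw0 i) hw1 (fun i _ => Set.mem_univ _)
  have hsum : ∑ i, w i * -(β * W i) = -(β * ∑ i, w i * W i) := by
    rw [mul_sum, ← sum_neg_distrib]
    exact sum_congr rfl fun i _ => by ring
  have hexp := Real.exp_le_exp.mp (hjensen.trans h)
  rw [hsum, neg_le_neg_iff] at hexp
  exact le_of_mul_le_mul_left hexp hβ

section Diagonalization

variable {ι : Type*} [Fintype ι] [DecidableEq ι] {P : Matrix ι ι ℂ}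

lemma exp_smul_conj_diagonal (hP : Pᴴ * P = 1) (t : ℝ) (d : ι → ℝ) :
    NormedSpace.exp (t • (P * diagonal (fun i => (d i : ℂ)) * Pᴴ))
      = P * diagonal (fun i => (Real.exp (t * d i) : ℂ)) * Pᴴ := by
  have hinv : P⁻¹ = Pᴴ := inv_eq_left_inv hP
  have hunit : IsUnit P := (isUnit_iff_isUnit_det P).mpr (isUnit_det_of_left_inverse hP)
  have hdiag : t • diagonal (fun i => (d i : ℂ)) = diagonal (fun i => ((t * d i : ℝ) : ℂ)) := by
    ext i j
    by_cases hij : i = j <;> simp [hij, Complex.real_smul]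
  rw [← hinv, ← smul_mul_assoc, ← mul_smul_comm, hdiag, exp_conj P _ hunit, exp_diagonal]
  congr 3
  funext i
  simp [Complex.ofReal_exp, Complex.exp_eq_exp_ℂ]

lemma trace_conj_diagonal (hP : Pᴴ * P = 1) (d : ι → ℂ) :
    (P * diagonal d * Pᴴ).trace = ∑ i, d i := by
  rw [trace_mul_cycle, hP, one_mul, trace_diagonal]

lemma conj_diagonal_mul_conj_diagonal (hP : Pᴴ * P = 1) (d d' : ι → ℂ) :
    P * diagonal d * Pᴴ * (P * diagonal d' * Pᴴ) = P * diagonal (fun i => d i * d' i) * Pᴴ := by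
  rw [← diagonal_mul_diagonal]
  simp only [Matrix.mul_assoc]
  rw [← Matrix.mul_assoc Pᴴ, hP, Matrix.one_mul]

lemma conjTranspose_mul_self_of_orthonormal {v : ι → ι → ℂ}
    (hv : ∀ i i', ∑ x, (starRingEnd ℂ) (v i x) * v i' x = if i = i' then 1 else 0) :
    (of fun x i => v i x)ᴴ * of (fun x i => v i x) = 1 := by
  ext i i'
  simpa [mul_apply, one_apply] using hv i i'

lemma eq_conj_diagonal_of_orthonormal_eigenvectors {H : Matrix ι ι ℂ} {v : ι → ι → ℂ}
    {d : ι → ℝ}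
    (hv : ∀ i i', ∑ x, (starRingEnd ℂ) (v i x) * v i' x = if i = i' then 1 else 0)
    (heig : ∀ i, H *ᵥ v i = (d i : ℂ) • v i) :
    H = of (fun x i => v i x) * diagonal (fun i => (d i : ℂ)) * (of fun x i => v i x)ᴴ := by
  set P : Matrix ι ι ℂ := of fun x i => v i x
  have hP : Pᴴ * P = 1 := conjTranspose_mul_self_of_orthonormal hv
  have hHP : H * P = P * diagonal (fun i => (d i : ℂ)) := by
    ext x i
    rw [mul_diagonal]
    simpa [P, mul_apply, mulVec, dotProduct, mul_comm] using congrFun (heig i) x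
  rw [← hHP, Matrix.mul_assoc, mul_eq_one_comm.mp hP, Matrix.mul_one]

end Diagonalization

section PartitionFunction

variable {k : ℕ} {H P : Matrix (Fin k) (Fin k) ℂ} {d : Fin k → ℝ}

lemma zpart_eq_sum_exp (hP : Pᴴ * P = 1) (hH : H = P * diagonal (fun i => (d i : ℂ)) * Pᴴ)
    (β : ℝ) : Zpart β H = ∑ i, Real.exp (-(β * d i)) := by
  rw [Zpart, hH, exp_smul_conj_diagonal hP, trace_conj_diagonal hP, ← Complex.ofReal_sum,
    Complex.ofReal_re]
  simp only [neg_mul]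

lemma re_trace_mul_gibbs (hP : Pᴴ * P = 1) (hH : H = P * diagonal (fun i => (d i : ℂ)) * Pᴴ)
    (β : ℝ) : ((H * gibbs β H).trace).re = ∑ i, boltzmann β d i * d i := by
  rw [gibbs, zpart_eq_sum_exp hP hH, mul_smul_comm, trace_smul, hH, exp_smul_conj_diagonal hP,
    conj_diagonal_mul_conj_diagonal hP, trace_conj_diagonal hP]
  simp only [smul_eq_mul, ← Complex.ofReal_inv, ← Complex.ofReal_mul, ← Complex.ofReal_sum,
    Complex.ofReal_re, mul_sum]
  refine sum_congr rfl fun i _ => ?_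
  rw [boltzmann]
  ring_nf

lemma Matrix.IsHermitian.zpart_pos [Nonempty (Fin k)] (hH : H.IsHermitian) (β : ℝ) :
    0 < Zpart β H := by
  set U : Matrix (Fin k) (Fin k) ℂ := (hH.eigenvectorUnitary : Matrix (Fin k) (Fin k) ℂ)
  have hU : Uᴴ * U = 1 := by
    simpa [star_eq_conjTranspose] using Unitary.coe_star_mul_self hH.eigenvectorUnitary
  have hspec : H = U * diagonal (fun i => (hH.eigenvalues i : ℂ)) * Uᴴ := by
    conv_lhs => rw [hH.spectral_theorem]
    rw [Unitary.conjStarAlgAut_apply, star_eq_conjTranspose]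
    rfl
  rw [zpart_eq_sum_exp hU hspec]
  exact sum_exp_neg_mul_pos β _

end PartitionFunction

lemma trace_kronecker_one_mul {n m : ℕ} (A : Matrix (Fin n) (Fin n) ℂ)
    (X : Matrix (Fin n × Fin m) (Fin n × Fin m) ℂ) :
    ((A ⊗ₖ (1 : Matrix (Fin m) (Fin m) ℂ)) * X).trace = (A * ptraceB X).trace := by
  simp only [Matrix.trace, Matrix.diag, mul_apply, ptraceB, of_apply, kroneckerMap_apply,
    one_apply, Fintype.sum_prod_type, ite_mul, zero_mul, mul_ite, mul_zero, mul_one, mul_sum,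
    sum_ite_eq, mem_univ, if_true]
  exact sum_congr rfl fun x _ => sum_comm

lemma re_trace_kronecker_one_mul_sum_smul {ι : Type*} {n m : ℕ} [Fintype ι]
    (A : Matrix (Fin n) (Fin n) ℂ) (p : ι → ℝ) (X : ι → Matrix (Fin n × Fin m) (Fin n × Fin m) ℂ) :
    (((A ⊗ₖ (1 : Matrix (Fin m) (Fin m) ℂ)) * ∑ i, (p i : ℂ) • X i).trace).re
      = ∑ i, p i * ((A * ptraceB (X i)).trace).re := by
  simp only [Matrix.mul_sum, Matrix.mul_smul, trace_sum, trace_smul, Complex.re_sum, smul_eq_mul,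
    Complex.re_ofReal_mul, trace_kronecker_one_mul]

theorem different_temperatures_jarzynski_general
    (n m : ℕ) (hn : 1 ≤ n) (hm : 1 ≤ m)
    (βS βB : ℝ) (hβS : 0 < βS)
    (HS0 HSt : Matrix (Fin n) (Fin n) ℂ)
    (hHSt : HSt.IsHermitian)
    (HB : Matrix (Fin m) (Fin m) ℂ)
    (e : Fin n → Fin n → ℂ) (ε : Fin n → ℝ)
    (he : ∀ i i', ∑ x, (starRingEnd ℂ) (e i x) * e i' x = if i = i' then 1 else 0)
    (heig : ∀ i, HS0 *ᵥ e i = (ε i : ℂ) • e i)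
    (f : Fin m → Fin m → ℂ) (q : Fin m → ℝ)
    (hf : ∀ j j', ∑ x, (starRingEnd ℂ) (f j x) * f j' x = if j = j' then 1 else 0)
    (hfeig : ∀ j, HB *ᵥ f j = (q j : ℂ) • f j)
    (U : Matrix (Fin n × Fin m) (Fin n × Fin m) ℂ)
    (Δβ : ℝ) (hΔβ : Δβ = βB - βS)
    (E : Fin n → ℝ)
    (hE : ∀ i, E i = ((HSt * channel U (gibbs βB HB) (outer (e i))).trace).re)
    (Zt : ℝ) (hZt : Zt = ∑ i, Real.exp (-(βS * E i)))
    (p : Fin n → ℝ) (hp : ∀ i, p i = Real.exp (-(βS * E i)) / Zt)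
    (Θ : Matrix (Fin n × Fin m) (Fin n × Fin m) ℂ)
    (hΘ : Θ = ∑ i, (p i : ℂ) • (U * (outer (e i) ⊗ₖ gibbs βB HB) * Uᴴ))
    (lam : Fin n → Fin m → ℝ)
    (hlam : ∀ i j, lam i j = p i * Real.exp (-(βB * q j)) / Zpart βB HB)
    (Qg : ℝ)
    (hQg : Qg = ((HB * gibbs βB HB).trace).re
      - ((((1 : Matrix (Fin n) (Fin n) ℂ) ⊗ₖ HB) * Θ).trace).re)
    (Wg : Fin n → ℝ) (hWg : ∀ i, Wg i = (E i - ε i) - Qg)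
    (D : ℝ)
    (hD : D = (∑ i, ∑ j, lam i j * Real.log (lam i j))
      + βS * (((HSt ⊗ₖ (1 : Matrix (Fin m) (Fin m) ℂ)) * Θ).trace).re
      + βB * ((((1 : Matrix (Fin n) (Fin n) ℂ) ⊗ₖ HB) * Θ).trace).re
      + Real.log (Zpart βS HSt * Zpart βB HB))
    (ΔF : ℝ) (hΔF : ΔF = -(βS⁻¹ * Real.log (Zpart βS HSt / Zpart βS HS0))) :
    ∑ i, (Real.exp (-(βS * ε i)) / Zpart βS HS0) * Real.exp (-(βS * Wg i))
        = Real.exp (-(βS * ΔF)) * Real.exp (-D) * Real.exp (-(Δβ * Qg))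
      ∧ ∑ i, (Real.exp (-(βS * ε i)) / Zpart βS HS0) * Wg i
          ≥ ΔF + βS⁻¹ * D + (Δβ / βS) * Qg := by
  have : Nonempty (Fin n) := ⟨⟨0, hn⟩⟩
  have : Nonempty (Fin m) := ⟨⟨0, hm⟩⟩
  have hHS0 := eq_conj_diagonal_of_orthonormal_eigenvectors he heig
  have hHB := eq_conj_diagonal_of_orthonormal_eigenvectors hf hfeig
  have hZS0 := zpart_eq_sum_exp (conjTranspose_mul_self_of_orthonormal he) hHS0 βS
  have hZB := zpart_eq_sum_exp (conjTranspose_mul_self_of_orthonormal hf) hHB βB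
  have hZSt := hHSt.zpart_pos βS
  have hp' : p = boltzmann βS E := funext fun i => by rw [hp, hZt]; rfl
  have hlam' : lam = fun i j => p i * boltzmann βB q j := by
    funext i j; rw [hlam, hZB, mul_div_assoc]; rfl
  have hQg' : Qg = ∑ j, boltzmann βB q j * q j
      - ((((1 : Matrix (Fin n) (Fin n) ℂ) ⊗ₖ HB) * Θ).trace).re := by
    rw [hQg, re_trace_mul_gibbs (conjTranspose_mul_self_of_orthonormal hf) hHB]
  have hSt : (((HSt ⊗ₖ (1 : Matrix (Fin m) (Fin m) ℂ)) * Θ).trace).re = ∑ i, p i * E i := by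
    simp only [hΘ, re_trace_kronecker_one_mul_sum_smul, hE]
    rfl
  have hD' : D = Real.log (Zpart βS HSt) - Real.log Zt - βB * Qg := by
    rw [hD, hlam', sum_sum_mul_mul_log_mul _ _ (hp' ▸ sum_boltzmann βS E) (sum_boltzmann βB q),
      hSt, hQg', Real.log_mul hZSt.ne' (hZB ▸ sum_exp_neg_mul_pos βB q).ne', hp',
      sum_boltzmann_mul_log, sum_boltzmann_mul_log, ← hZt, ← hZB]
    ring
  have hjarzynski : ∑ i, (Real.exp (-(βS * ε i)) / Zpart βS HS0) * Real.exp (-(βS * Wg i))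
      = Real.exp (-(βS * ΔF)) * Real.exp (-D) * Real.exp (-(Δβ * Qg)) := by
    simp only [hWg, hZS0]
    exact sum_boltzmann_mul_exp_neg_mul_work_eq hβS.ne' hZSt hΔβ (hZS0 ▸ hΔF) (hZt ▸ hD')
  have hZS0pos : 0 < Zpart βS HS0 := hZS0 ▸ sum_exp_neg_mul_pos βS ε
  refine ⟨hjarzynski, le_sum_mul_of_sum_mul_exp_neg_mul_le
    (fun i => (div_pos (Real.exp_pos _) hZS0pos).le) (by rw [hZS0]; exact sum_boltzmann βS ε) hβS
    (le_of_eq ?_)⟩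
  rw [hjarzynski, ← Real.exp_add, ← Real.exp_add]
  congr 1
  field_simp
  ring

theorem different_temperatures_jarzynski
    (n m : ℕ) (hn : 1 ≤ n) (hm : 1 ≤ m)
    (βS βB : ℝ) (hβS : 0 < βS) (hβB : 0 < βB)
    (HS0 HSt : Matrix (Fin n) (Fin n) ℂ)
    (hHS0 : HS0.IsHermitian) (hHSt : HSt.IsHermitian)
    (HB : Matrix (Fin m) (Fin m) ℂ) (hHB : HB.IsHermitian)
    (e : Fin n → Fin n → ℂ) (ε : Fin n → ℝ)
    (he : ∀ i i', ∑ x, (starRingEnd ℂ) (e i x) * e i' x = if i = i' then 1 else 0)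
    (heig : ∀ i, HS0 *ᵥ e i = (ε i : ℂ) • e i)
    (f : Fin m → Fin m → ℂ) (q : Fin m → ℝ)
    (hf : ∀ j j', ∑ x, (starRingEnd ℂ) (f j x) * f j' x = if j = j' then 1 else 0)
    (hfeig : ∀ j, HB *ᵥ f j = (q j : ℂ) • f j)
    (U : Matrix (Fin n × Fin m) (Fin n × Fin m) ℂ)
    (hU : U ∈ Matrix.unitaryGroup (Fin n × Fin m) ℂ)
    (Δβ : ℝ) (hΔβ : Δβ = βB - βS)
    (E : Fin n → ℝ)
    (hE : ∀ i, E i = ((HSt * channel U (gibbs βB HB) (outer (e i))).trace).re)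
    (Zt : ℝ) (hZt : Zt = ∑ i, Real.exp (-(βS * E i)))
    (p : Fin n → ℝ) (hp : ∀ i, p i = Real.exp (-(βS * E i)) / Zt)
    (Θ : Matrix (Fin n × Fin m) (Fin n × Fin m) ℂ)
    (hΘ : Θ = ∑ i, (p i : ℂ) • (U * (outer (e i) ⊗ₖ gibbs βB HB) * Uᴴ))
    (lam : Fin n → Fin m → ℝ)
    (hlam : ∀ i j, lam i j = p i * Real.exp (-(βB * q j)) / Zpart βB HB)
    (Qg : ℝ)
    (hQg : Qg = ((HB * gibbs βB HB).trace).re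
      - ((((1 : Matrix (Fin n) (Fin n) ℂ) ⊗ₖ HB) * Θ).trace).re)
    (Wg : Fin n → ℝ) (hWg : ∀ i, Wg i = (E i - ε i) - Qg)
    (D : ℝ)
    (hD : D = (∑ i, ∑ j, lam i j * Real.log (lam i j))
      + βS * (((HSt ⊗ₖ (1 : Matrix (Fin m) (Fin m) ℂ)) * Θ).trace).re
      + βB * ((((1 : Matrix (Fin n) (Fin n) ℂ) ⊗ₖ HB) * Θ).trace).re
      + Real.log (Zpart βS HSt * Zpart βB HB))
    (ΔF : ℝ) (hΔF : ΔF = -(βS⁻¹ * Real.log (Zpart βS HSt / Zpart βS HS0))) :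
    ∑ i, (Real.exp (-(βS * ε i)) / Zpart βS HS0) * Real.exp (-(βS * Wg i))
        = Real.exp (-(βS * ΔF)) * Real.exp (-D) * Real.exp (-(Δβ * Qg))
      ∧ ∑ i, (Real.exp (-(βS * ε i)) / Zpart βS HS0) * Wg i
          ≥ ΔF + βS⁻¹ * D + (Δβ / βS) * Qg :=
  different_temperatures_jarzynski_general n m hn hm βS βB hβS HS0 HSt hHSt HB e ε he heig f q hf
    hfeig U Δβ hΔβ E hE Zt hZt p hp Θ hΘ lam hlam Qg hQg Wg hWg D hD ΔF hΔF
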